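/- The normalized thermodynamic integral vanishes: for any choice of strictly positive probability densities p₀, p₁ and the geometric path p_t joining them, ∫₀¹ ∫_Θ p_t(θ) log(p₁(θ)/p₀(θ)) dν(θ) dt = 0. -/

import Mathlib

/-!
Write `μ(t) = ∫ p₁^t p₀^(1-t) dν`. Differentiating under the integral sign, legitimate on every
compact subinterval of `(0, 1)` because `y e^{-y}` is bounded, gives
`(log μ)'(t) = ∫ p_t log (p₁ / p₀) dν`. The joint integrability hypothesis makes this derivative
integrable on `[0, 1]`, so by the fundamental theorem of calculus the thermodynamic integral equals
`log μ(1) - log μ(0) = log 1 - log 1 = 0`.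
-/

open MeasureTheory Real Set

namespace Real

lemma mul_exp_neg_mul_le_inv {c : ℝ} (hc : 0 < c) (y : ℝ) : y * exp (-(c * y)) ≤ c⁻¹ := by
  have h : c * y * exp (-(c * y)) ≤ 1 :=
    (mul_exp_neg_le_exp_neg_one _).trans (exp_le_one_iff.2 (by norm_num))
  calc y * exp (-(c * y)) = c⁻¹ * (c * y * exp (-(c * y))) := by field_simp
    _ ≤ c⁻¹ := mul_le_of_le_one_right (inv_nonneg.2 hc.le) h

lemma rpow_mul_rpow_one_sub_eq_mul_exp {a b : ℝ} (ha : 0 < a) (hb : 0 < b) (t : ℝ) :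
    b ^ t * a ^ (1 - t) = a * exp (t * log (b / a)) := by
  rw [rpow_def_of_pos hb, rpow_def_of_pos ha, ← exp_add, log_div hb.ne' ha.ne']
  rw [show log b * t + log a * (1 - t) = log a + t * (log b - log a) by ring, exp_add,
    exp_log ha]

lemma rpow_mul_rpow_one_sub_le_add {a b t : ℝ} (ha : 0 ≤ a) (hb : 0 ≤ b) (ht : t ∈ Icc (0 : ℝ) 1) :
    b ^ t * a ^ (1 - t) ≤ a + b := by
  have := geom_mean_le_arith_mean2_weighted ht.1 (sub_nonneg.2 ht.2) hb ha (by ring)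
  nlinarith [ht.1, ht.2]

lemma hasDerivAt_rpow_mul_rpow_one_sub {a b : ℝ} (ha : 0 < a) (hb : 0 < b) (t : ℝ) :
    HasDerivAt (fun t => b ^ t * a ^ (1 - t)) (b ^ t * a ^ (1 - t) * log (b / a)) t := by
  simp_rw [rpow_mul_rpow_one_sub_eq_mul_exp ha hb]
  simpa [mul_assoc] using ((hasDerivAt_mul_const (log (b / a))).exp).const_mul a

lemma rpow_mul_rpow_one_sub_mul_abs_log_le {a b s t u : ℝ} (ha : 0 < a) (hb : 0 < b)
    (hs : 0 < s) (hu : u < 1) (hst : s ≤ t) (htu : t ≤ u) :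
    b ^ t * a ^ (1 - t) * |log (b / a)| ≤ a / s + b / (1 - u) := by
  rw [rpow_mul_rpow_one_sub_eq_mul_exp ha hb]
  set l := log (b / a)
  have hb_eq : b = a * exp l := by rw [exp_log (div_pos hb ha)]; field_simp
  rcases le_or_gt 0 l with hl | hl
  · calc a * exp (t * l) * |l| ≤ a * exp (u * l) * l := by
          rw [abs_of_nonneg hl]; gcongr
      _ = b * (l * exp (-((1 - u) * l))) := by
          rw [hb_eq, show exp (u * l) = exp l * exp (-((1 - u) * l)) by
            rw [← exp_add]; ring_nf]
          ring
      _ ≤ b * (1 - u)⁻¹ := by gcongr; exact mul_exp_neg_mul_le_inv (by linarith) l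
      _ ≤ a / s + b / (1 - u) := by rw [← div_eq_mul_inv]; linarith [div_pos ha hs]
  · calc a * exp (t * l) * |l| ≤ a * exp (s * l) * -l := by
          rw [abs_of_neg hl]
          have : exp (t * l) ≤ exp (s * l) := exp_le_exp.2 (mul_le_mul_of_nonpos_right hst hl.le)
          exact mul_le_mul_of_nonneg_right (by gcongr) (by linarith)
      _ = a * (-l * exp (-(s * -l))) := by ring_nf
      _ ≤ a * s⁻¹ := by gcongr; exact mul_exp_neg_mul_le_inv hs _
      _ ≤ a / s + b / (1 - u) := by
          rw [← div_eq_mul_inv]; linarith [div_pos hb (show 0 < 1 - u by linarith)]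

end Real

noncomputable def chernoffCoeff {Θ : Type*} [MeasurableSpace Θ] (ν : Measure Θ) (p0 p1 : Θ → ℝ)
    (t : ℝ) : ℝ :=
  ∫ θ, p1 θ ^ t * p0 θ ^ (1 - t) ∂ν

noncomputable def geometricPath {Θ : Type*} [MeasurableSpace Θ] (ν : Measure Θ)
    (p0 p1 : Θ → ℝ) (t : ℝ) (θ : Θ) : ℝ :=
  p1 θ ^ t * p0 θ ^ (1 - t) / chernoffCoeff ν p0 p1 t

section ChernoffCoeff

variable {Θ : Type*} [MeasurableSpace Θ] {ν : Measure Θ} {p0 p1 : Θ → ℝ}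

lemma chernoffCoeff_zero : chernoffCoeff ν p0 p1 0 = ∫ θ, p0 θ ∂ν := by
  simp [chernoffCoeff]

lemma chernoffCoeff_one : chernoffCoeff ν p0 p1 1 = ∫ θ, p1 θ ∂ν := by
  simp [chernoffCoeff]

lemma chernoffCoeff_nonneg (hp0 : ∀ᵐ θ ∂ν, 0 ≤ p0 θ) (hp1 : ∀ᵐ θ ∂ν, 0 ≤ p1 θ) (t : ℝ) :
    0 ≤ chernoffCoeff ν p0 p1 t :=
  integral_nonneg_of_ae <| by
    filter_upwards [hp0, hp1] with θ h0θ h1θ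
    positivity

lemma integrable_rpow_mul_rpow_one_sub (h0 : Integrable p0 ν) (h1 : Integrable p1 ν)
    (hp0 : ∀ᵐ θ ∂ν, 0 ≤ p0 θ) (hp1 : ∀ᵐ θ ∂ν, 0 ≤ p1 θ) {t : ℝ} (ht : t ∈ Icc (0 : ℝ) 1) :
    Integrable (fun θ => p1 θ ^ t * p0 θ ^ (1 - t)) ν := by
  refine (h0.add h1).mono' ((h1.aemeasurable.pow_const t).mul
    (h0.aemeasurable.pow_const (1 - t))).aestronglyMeasurable ?_
  filter_upwards [hp0, hp1] with θ h0θ h1θ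
  rw [norm_of_nonneg (by positivity)]
  exact rpow_mul_rpow_one_sub_le_add h0θ h1θ ht

lemma continuousOn_chernoffCoeff (h0 : Integrable p0 ν) (h1 : Integrable p1 ν)
    (hp0 : ∀ᵐ θ ∂ν, 0 < p0 θ) (hp1 : ∀ᵐ θ ∂ν, 0 < p1 θ) :
    ContinuousOn (chernoffCoeff ν p0 p1) (Icc 0 1) := by
  refine continuousOn_of_dominated (F := fun t θ => p1 θ ^ t * p0 θ ^ (1 - t))
    (bound := fun θ => p0 θ + p1 θ)
    (fun t ht => (integrable_rpow_mul_rpow_one_sub h0 h1 (hp0.mono fun _ h => h.le)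
      (hp1.mono fun _ h => h.le) ht).aestronglyMeasurable) (fun t ht => ?_) (h0.add h1) ?_
  · filter_upwards [hp0, hp1] with θ h0θ h1θ
    rw [norm_of_nonneg (by positivity)]
    exact rpow_mul_rpow_one_sub_le_add h0θ.le h1θ.le ht
  · filter_upwards [hp0, hp1] with θ h0θ h1θ
    exact (continuous_iff_continuousAt.2 fun t =>
      (hasDerivAt_rpow_mul_rpow_one_sub h0θ h1θ t).continuousAt).continuousOn

lemma hasDerivAt_chernoffCoeff (h0 : Integrable p0 ν) (h1 : Integrable p1 ν)
    (hp0 : ∀ᵐ θ ∂ν, 0 < p0 θ) (hp1 : ∀ᵐ θ ∂ν, 0 < p1 θ) {t : ℝ} (ht : t ∈ Ioo (0 : ℝ) 1) :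
    HasDerivAt (chernoffCoeff ν p0 p1)
      (∫ θ, p1 θ ^ t * p0 θ ^ (1 - t) * log (p1 θ / p0 θ) ∂ν) t := by
  obtain ⟨s, u, hs, hu, hts⟩ : ∃ s u : ℝ, 0 < s ∧ u < 1 ∧ t ∈ Ioo s u :=
    ⟨t / 2, (t + 1) / 2, by linarith [ht.1], by linarith [ht.2], by linarith [ht.1],
      by linarith [ht.2]⟩
  have hsub : Ioo s u ⊆ Icc 0 1 := fun x hx => ⟨by linarith [hx.1], by linarith [hx.2]⟩
  have hint : ∀ x ∈ Ioo s u, Integrable (fun θ => p1 θ ^ x * p0 θ ^ (1 - x)) ν := fun x hx =>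
    integrable_rpow_mul_rpow_one_sub h0 h1 (hp0.mono fun _ h => h.le) (hp1.mono fun _ h => h.le)
      (hsub hx)
  have hlog : AEStronglyMeasurable (fun θ => log (p1 θ / p0 θ)) ν :=
    (measurable_log.comp_aemeasurable (h1.aemeasurable.div h0.aemeasurable)).aestronglyMeasurable
  refine (hasDerivAt_integral_of_dominated_loc_of_deriv_le
    (F := fun t θ => p1 θ ^ t * p0 θ ^ (1 - t))
    (F' := fun t θ => p1 θ ^ t * p0 θ ^ (1 - t) * log (p1 θ / p0 θ))
    (bound := fun θ => p0 θ / s + p1 θ / (1 - u)) (Ioo_mem_nhds hts.1 hts.2)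
    (Filter.eventually_of_mem (Ioo_mem_nhds hts.1 hts.2) fun x hx =>
      (hint x hx).aestronglyMeasurable)
    (hint t hts) ((hint t hts).aestronglyMeasurable.mul hlog) ?_
    ((h0.div_const s).add (h1.div_const (1 - u))) ?_).2
  · filter_upwards [hp0, hp1] with θ h0θ h1θ x hx
    rw [norm_mul, norm_of_nonneg (by positivity), norm_eq_abs]
    exact rpow_mul_rpow_one_sub_mul_abs_log_le h0θ h1θ hs hu hx.1.le hx.2.le
  · filter_upwards [hp0, hp1] with θ h0θ h1θ x _
    exact hasDerivAt_rpow_mul_rpow_one_sub h0θ h1θ x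

lemma chernoffCoeff_pos (hν : ν ≠ 0) (h0 : Integrable p0 ν) (h1 : Integrable p1 ν)
    (hp0 : ∀ᵐ θ ∂ν, 0 < p0 θ) (hp1 : ∀ᵐ θ ∂ν, 0 < p1 θ) {t : ℝ} (ht : t ∈ Icc (0 : ℝ) 1) :
    0 < chernoffCoeff ν p0 p1 t := by
  have hpos : ∀ᵐ θ ∂ν, 0 < p1 θ ^ t * p0 θ ^ (1 - t) := by
    filter_upwards [hp0, hp1] with θ h0θ h1θ
    positivity
  rw [chernoffCoeff, integral_pos_iff_support_of_nonneg_ae (hpos.mono fun _ h => h.le)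
    (integrable_rpow_mul_rpow_one_sub h0 h1 (hp0.mono fun _ h => h.le)
      (hp1.mono fun _ h => h.le) ht)]
  have hsupp : ∀ᵐ θ ∂ν, θ ∈ Function.support fun θ => p1 θ ^ t * p0 θ ^ (1 - t) :=
    hpos.mono fun _ h => h.ne'
  rw [measure_congr (ae_eq_univ.2 (ae_iff.1 hsupp))]
  exact Measure.measure_univ_pos.2 hν

lemma hasDerivAt_log_chernoffCoeff (hν : ν ≠ 0) (h0 : Integrable p0 ν) (h1 : Integrable p1 ν)
    (hp0 : ∀ᵐ θ ∂ν, 0 < p0 θ) (hp1 : ∀ᵐ θ ∂ν, 0 < p1 θ) {t : ℝ} (ht : t ∈ Ioo (0 : ℝ) 1) :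
    HasDerivAt (fun t => log (chernoffCoeff ν p0 p1 t))
      (∫ θ, geometricPath ν p0 p1 t θ * log (p1 θ / p0 θ) ∂ν) t := by
  simp_rw [geometricPath, div_mul_eq_mul_div, integral_div]
  exact (hasDerivAt_chernoffCoeff h0 h1 hp0 hp1 ht).log
    (chernoffCoeff_pos hν h0 h1 hp0 hp1 (Ioo_subset_Icc_self ht)).ne'

lemma intervalIntegrable_integral_geometricPath_mul_log [SFinite ν]
    (h0 : Integrable p0 ν) (h1 : Integrable p1 ν)
    (hp0 : ∀ᵐ θ ∂ν, 0 < p0 θ) (hp1 : ∀ᵐ θ ∂ν, 0 < p1 θ)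
    (hdom : Integrable (fun x : ℝ × Θ => geometricPath ν p0 p1 x.1 x.2 *
      |log (p1 x.2 / p0 x.2)|) ((volume.restrict (Icc 0 1)).prod ν)) :
    IntervalIntegrable (fun t => ∫ θ, geometricPath ν p0 p1 t θ * log (p1 θ / p0 θ) ∂ν)
      volume 0 1 := by
  set ρ := (volume.restrict (Icc (0 : ℝ) 1)).prod ν
  have hq0 : AEMeasurable (fun x : ℝ × Θ => p0 x.2) ρ :=
    h0.aemeasurable.comp_quasiMeasurePreserving Measure.quasiMeasurePreserving_snd
  have hq1 : AEMeasurable (fun x : ℝ × Θ => p1 x.2) ρ :=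
    h1.aemeasurable.comp_quasiMeasurePreserving Measure.quasiMeasurePreserving_snd
  have hqμ : AEMeasurable (fun x : ℝ × Θ => chernoffCoeff ν p0 p1 x.1) ρ :=
    ((continuousOn_chernoffCoeff h0 h1 hp0 hp1).aemeasurable measurableSet_Icc
      ).comp_quasiMeasurePreserving Measure.quasiMeasurePreserving_fst
  have hmeas : AEStronglyMeasurable
      (fun x : ℝ × Θ => geometricPath ν p0 p1 x.1 x.2 * log (p1 x.2 / p0 x.2)) ρ := by
    unfold geometricPath
    exact (by fun_prop : AEMeasurable _ ρ).aestronglyMeasurable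
  have hle : ∀ᵐ x ∂ρ, ‖geometricPath ν p0 p1 x.1 x.2 * log (p1 x.2 / p0 x.2)‖ ≤
      geometricPath ν p0 p1 x.1 x.2 * |log (p1 x.2 / p0 x.2)| := by
    filter_upwards [Measure.quasiMeasurePreserving_snd.ae hp0,
      Measure.quasiMeasurePreserving_snd.ae hp1] with x h0x h1x
    have hμ := chernoffCoeff_nonneg (hp0.mono fun _ h => h.le) (hp1.mono fun _ h => h.le) x.1
    rw [norm_mul, norm_of_nonneg (by unfold geometricPath; positivity), norm_eq_abs]
  exact (intervalIntegrable_iff_integrableOn_Icc_of_le zero_le_one).2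
    (hdom.mono' hmeas hle).integral_prod_left

end ChernoffCoeff

theorem normalized_thermodynamic_integral_eq_zero_general
    {Θ : Type*} [MeasurableSpace Θ] (ν : Measure Θ) [SigmaFinite ν]
    (p0 p1 : Θ → ℝ)
    (hp0pos : ∀ᵐ θ ∂ν, 0 < p0 θ) (hp1pos : ∀ᵐ θ ∂ν, 0 < p1 θ)
    (hp0int : ∫ θ, p0 θ ∂ν = 1) (hp1int : ∫ θ, p1 θ ∂ν = 1)
    (μc : ℝ → ℝ) (hμc : ∀ t, μc t = ∫ θ, p1 θ ^ t * p0 θ ^ (1 - t) ∂ν)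
    (hdom : Integrable
      (fun x : ℝ × Θ =>
        (p1 x.2 ^ x.1 * p0 x.2 ^ (1 - x.1) / μc x.1) * |Real.log (p1 x.2 / p0 x.2)|)
      ((volume.restrict (Set.Icc (0:ℝ) 1)).prod ν)) :
    (∫ t in (0:ℝ)..1, ∫ θ,
        (p1 θ ^ t * p0 θ ^ (1 - t) / μc t) * Real.log (p1 θ / p0 θ) ∂ν) = 0 := by
  obtain rfl : μc = chernoffCoeff ν p0 p1 := funext hμc
  have h0 : Integrable p0 ν := .of_integral_ne_zero (by simp [hp0int])
  have h1 : Integrable p1 ν := .of_integral_ne_zero (by simp [hp1int])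
  have hν : ν ≠ 0 := by rintro rfl; simp at hp0int
  refine (intervalIntegral.integral_eq_sub_of_hasDerivAt_of_le zero_le_one
    ((continuousOn_chernoffCoeff h0 h1 hp0pos hp1pos).log
      fun t ht => (chernoffCoeff_pos hν h0 h1 hp0pos hp1pos ht).ne')
    (fun t ht => hasDerivAt_log_chernoffCoeff hν h0 h1 hp0pos hp1pos ht)
    (intervalIntegrable_integral_geometricPath_mul_log h0 h1 hp0pos hp1pos hdom)).trans ?_
  simp [chernoffCoeff_zero, chernoffCoeff_one, hp0int, hp1int]

/-- The normalized thermodynamic integral vanishes: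
`∫₀¹ ∫ p_t(θ) log(p₁(θ)/p₀(θ)) dν dt = 0`. -/
theorem normalized_thermodynamic_integral_eq_zero
    {Θ : Type*} [MeasurableSpace Θ] (ν : Measure Θ) [SigmaFinite ν]
    (p0 p1 : Θ → ℝ)
    (hp0pos : ∀ᵐ θ ∂ν, 0 < p0 θ) (hp1pos : ∀ᵐ θ ∂ν, 0 < p1 θ)
    (hp0int : ∫ θ, p0 θ ∂ν = 1) (hp1int : ∫ θ, p1 θ ∂ν = 1)
    (μc : ℝ → ℝ) (hμc : ∀ t, μc t = ∫ θ, p1 θ ^ t * p0 θ ^ (1 - t) ∂ν)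
    (hμint : ∀ t ∈ Set.Icc (0:ℝ) 1,
      Integrable (fun θ => p1 θ ^ t * p0 θ ^ (1 - t)) ν)
    (hμpos : ∀ t ∈ Set.Icc (0:ℝ) 1, 0 < μc t)
    (hdom : Integrable
      (fun x : ℝ × Θ =>
        (p1 x.2 ^ x.1 * p0 x.2 ^ (1 - x.1) / μc x.1) * |Real.log (p1 x.2 / p0 x.2)|)
      ((volume.restrict (Set.Icc (0:ℝ) 1)).prod ν)) :
    (∫ t in (0:ℝ)..1, ∫ θ,
        (p1 θ ^ t * p0 θ ^ (1 - t) / μc t) * Real.log (p1 θ / p0 θ) ∂ν) = 0 :=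
  normalized_thermodynamic_integral_eq_zero_general ν p0 p1 hp0pos hp1pos hp0int hp1int μc hμc hdom
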